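/- arXiv:1805.10350 — 5 statements merged into one kernel-verified Lean document; each statement's English description precedes it below -/
import Mathlib

section
/- With f, s, β, r as above (f monic of degree t with nonzero constant term annihilating s, f(β) ≠ 0, r_n = s_{n+1} − β s_n), if r has a run of exactly l zeroes starting at index 0 (r_0 = ⋯ = r_{l−1} = 0 and r_l ≠ 0), then s_0 = 0 if and only if s_0 = s_1 = ⋯ = s_l = 0 and s_{l+1} ≠ 0, i.e. s has a run of exactly l+1 zeroes starting at index 0. -/
theorem stmt1 {F : Type*} [Field F] [Fintype F]
    (t : ℕ) (b : ℕ → F) (hmonic : b t = 1) (hb0 : b 0 ≠ 0)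
    (s : ℤ → F)
    (hann : ∀ n : ℤ, ∑ i ∈ Finset.range (t + 1), b i * s (n + i) = 0)
    (β : F) (hβ : ∑ i ∈ Finset.range (t + 1), b i * β ^ i ≠ 0)
    (r : ℤ → F) (hr : ∀ n : ℤ, r n = s (n + 1) - β * s n)
    (l : ℕ) (hrun : ∀ m : ℕ, m < l → r m = 0) (hrl : r l ≠ 0) :
    s 0 = 0 ↔ ((∀ j : ℕ, j ≤ l → s j = 0) ∧ s ((l : ℤ) + 1) ≠ 0) := by
  constructor
  · intro h0
    have hz : ∀ j : ℕ, j ≤ l → s j = 0 := by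
      intro j
      induction j with
      | zero => intro _; exact_mod_cast h0
      | succ n ih =>
        intro hn
        have hrn := hrun n (lt_of_lt_of_le (Nat.lt_succ_self n) hn)
        rw [hr n] at hrn
        have hsn : s n = 0 := ih (le_of_lt (lt_of_lt_of_le (Nat.lt_succ_self n) hn))
        have : s ((n : ℤ) + 1) = 0 := by
          have := sub_eq_zero.mp hrn
          rw [this, hsn, mul_zero]
        simpa using this
    refine ⟨hz, ?_⟩
    have hrl' := hrl
    rw [hr l] at hrl'
    have hsl : s l = 0 := hz l le_rfl
    rw [hsl, mul_zero, sub_zero] at hrl'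
    exact hrl'
  · rintro ⟨hz, _⟩
    exact_mod_cast hz 0 (Nat.zero_le l)
end

section
/- Let f(x) = Σ_{i=0}^t b_i x^i be monic of degree t over F_q with b_0 ≠ 0, s : ℤ → F_q annihilated by f, β ∈ F_q with f(β) ≠ 0, r_n = s_{n+1} − β s_n, and suppose r_0 = ⋯ = r_{l−1} = 0. Define P_{l,r}(x) = Σ_{j=l+1}^{t} b_j (Σ_{m=l}^{j−1} r_m x^{j−1−m}). Then β is a root of the polynomial s_0·f(x) + P_{l,r}(x). -/
open Polynomial in
theorem stmt2 {F : Type*} [Field F] [Fintype F]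
    (t : ℕ) (b : ℕ → F) (hmonic : b t = 1) (hb0 : b 0 ≠ 0)
    (s : ℤ → F)
    (hann : ∀ n : ℤ, ∑ i ∈ Finset.range (t + 1), b i * s (n + i) = 0)
    (β : F) (hβ : ∑ i ∈ Finset.range (t + 1), b i * β ^ i ≠ 0)
    (r : ℤ → F) (hr : ∀ n : ℤ, r n = s (n + 1) - β * s n)
    (l : ℕ) (hrun : ∀ m : ℕ, m < l → r m = 0)
    (f P : Polynomial F)
    (hf : f = ∑ i ∈ Finset.range (t + 1), C (b i) * X ^ i)
    (hP : P = ∑ j ∈ Finset.Icc (l + 1) t, C (b j) *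
        ∑ m ∈ Finset.Icc l (j - 1), C (r m) * X ^ (j - 1 - m)) :
    (C (s 0) * f + P).eval β = 0 := by
  -- closed form for s n
  have hs : ∀ n : ℕ, s n = β ^ n * s 0 +
      ∑ m ∈ Finset.range n, r m * β ^ (n - 1 - m) := by
    intro n
    induction n with
    | zero => simp
    | succ n ih =>
      have h1 : s ((n : ℤ) + 1) = r n + β * s n := by
        rw [hr n]; ring
      have hcast : ((n + 1 : ℕ) : ℤ) = (n : ℤ) + 1 := by push_cast; ring
      rw [hcast, h1, ih, Finset.sum_range_succ]
      rw [mul_add, mul_comm (β : F) (β ^ n * s 0)]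
      have h2 : β * ∑ m ∈ Finset.range n, r m * β ^ (n - 1 - m)
          = ∑ m ∈ Finset.range n, r m * β ^ (n + 1 - 1 - m) := by
        rw [Finset.mul_sum]
        refine Finset.sum_congr rfl fun m hm => ?_
        have hm' : m < n := Finset.mem_range.mp hm
        have he : n + 1 - 1 - m = (n - 1 - m) + 1 := by omega
        rw [he, pow_succ]; ring
      rw [h2]
      simp [pow_succ]
      ring
  -- evaluate
  have hfe : f.eval β = ∑ i ∈ Finset.range (t + 1), b i * β ^ i := by
    simp [hf, eval_finset_sum]
  have hPe : P.eval β = ∑ j ∈ Finset.Icc (l + 1) t, b j *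
      ∑ m ∈ Finset.Icc l (j - 1), r m * β ^ (j - 1 - m) := by
    simp [hP, eval_finset_sum]
  have key : ∑ i ∈ Finset.range (t + 1), b i * s i
      = s 0 * f.eval β + P.eval β := by
    have hterm : ∀ i ∈ Finset.range (t + 1), b i * s i
        = s 0 * (b i * β ^ i)
          + b i * ∑ m ∈ Finset.range i, r m * β ^ (i - 1 - m) := by
      intro i _
      rw [hs i]; push_cast; ring
    rw [Finset.sum_congr rfl hterm, Finset.sum_add_distrib, ← Finset.mul_sum,
      hfe, hPe]
    congr 1
    -- sum over range (t+1) of the P part equals sum over Icc (l+1) t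
    rw [← Finset.sum_subset (s₁ := Finset.Icc (l + 1) t)
      (by intro x hx; simp at hx ⊢; omega)]
    · refine Finset.sum_congr rfl fun j hj => ?_
      have hj' : l + 1 ≤ j ∧ j ≤ t := Finset.mem_Icc.mp hj
      congr 1
      rw [← Finset.sum_subset (s₁ := Finset.Icc l (j - 1))
        (by intro x hx; simp at hx ⊢; omega)]
      intro x hx hx'
      simp at hx hx'
      have : r x = 0 := hrun x (by omega)
      simp [this]
    · intro i hi hi'
      simp at hi hi'
      have hz : ∀ m ∈ Finset.range i, r m * β ^ (i - 1 - m) = 0 := by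
        intro m hm
        simp at hm
        have : r m = 0 := hrun m (by omega)
        simp [this]
      rw [Finset.sum_eq_zero hz, mul_zero]
  have h0 := hann 0
  simp only [zero_add] at h0
  rw [h0] at key
  rw [eval_add, eval_mul, eval_C]
  exact key.symm
end

section
/- With the setup of the previous statement (f monic degree t annihilating s, f(β) ≠ 0, r = (L−β)s, r having a run of exactly l zeroes at index 0, P_{l,r}(x) = Σ_{j=l+1}^t b_j Σ_{m=l}^{j−1} r_m x^{j−1−m}), the following are equivalent: (1) β is a root of P_{l,r}; (2) s_0 = 0; (3) s has a run of zeroes of length at least l+1 starting at index 0. -/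
open Polynomial in
theorem stmt3 {F : Type*} [Field F] [Fintype F]
    (t : ℕ) (b : ℕ → F) (hmonic : b t = 1) (hb0 : b 0 ≠ 0)
    (s : ℤ → F)
    (hann : ∀ n : ℤ, ∑ i ∈ Finset.range (t + 1), b i * s (n + i) = 0)
    (β : F) (hβ : ∑ i ∈ Finset.range (t + 1), b i * β ^ i ≠ 0)
    (r : ℤ → F) (hr : ∀ n : ℤ, r n = s (n + 1) - β * s n)
    (l : ℕ) (hrun : ∀ m : ℕ, m < l → r m = 0) (hrl : r l ≠ 0)
    (P : Polynomial F)
    (hP : P = ∑ j ∈ Finset.Icc (l + 1) t, C (b j) *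
        ∑ m ∈ Finset.Icc l (j - 1), C (r m) * X ^ (j - 1 - m)) :
    (P.eval β = 0 ↔ s 0 = 0) ∧
      (s 0 = 0 ↔ ∀ j : ℕ, j ≤ l → s j = 0) := by
  -- s j = β^j * s 0 for j ≤ l
  have hA : ∀ j : ℕ, j ≤ l → s j = β ^ j * s 0 := by
    intro j hj
    induction j with
    | zero => simp
    | succ n ih =>
      have hrn := hr n
      have h1 : s ((n : ℤ) + 1) = β * s n + r n := by
        rw [hrn]; ring
      have h2 : ((n + 1 : ℕ) : ℤ) = (n : ℤ) + 1 := by push_cast; ring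
      rw [h2, h1, ih (by omega), hrun n (by omega)]
      ring
  -- r satisfies the same recurrence
  have hannr : ∀ n : ℤ, ∑ i ∈ Finset.range (t + 1), b i * r (n + i) = 0 := by
    intro n
    have h1 := hann (n + 1)
    have h2 := hann n
    have step : ∀ i ∈ Finset.range (t + 1),
        b i * r (n + i) = b i * s ((n + 1) + i) - β * (b i * s (n + i)) := by
      intro i _
      have : (n : ℤ) + i + 1 = (n + 1) + i := by ring
      rw [hr (n + i), this]; ring
    rw [Finset.sum_congr rfl step, Finset.sum_sub_distrib, ← Finset.mul_sum, h1, h2]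
    ring
  -- l < t
  have hlt : l < t := by
    by_contra hcon
    push_neg at hcon
    have key : ∀ n : ℕ, n ≤ l → r n = 0 := by
      intro n
      induction n using Nat.strong_induction_on with
      | _ n ih =>
        intro hn
        rcases Nat.lt_or_ge n t with h1 | h1
        · exact hrun n (lt_of_lt_of_le h1 hcon)
        · have hh := hannr ((n : ℤ) - t)
          rw [Finset.sum_range_succ] at hh
          have hb : b t * r ((n : ℤ) - t + t) = r n := by
            rw [hmonic, one_mul]
            congr 1
            ring
          have hz : ∀ i ∈ Finset.range t, b i * r ((n : ℤ) - t + i) = 0 := by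
            intro i hi
            simp only [Finset.mem_range] at hi
            have hc : ((n : ℤ) - t + i) = ((n - t + i : ℕ) : ℤ) := by push_cast; omega
            rw [hc, ih (n - t + i) (by omega) (by omega), mul_zero]
          rw [Finset.sum_eq_zero hz, hb, zero_add] at hh
          exact hh
    exact hrl (key l le_rfl)
  -- telescoping
  have hC : ∀ j : ℕ, ∑ m ∈ Finset.range j, r m * β ^ (j - 1 - m)
      = s j - β ^ j * s 0 := by
    intro j
    induction j with
    | zero => simp
    | succ n ih =>
      rw [Finset.sum_range_succ]
      have h1 : ∀ m ∈ Finset.range n,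
          r m * β ^ (n + 1 - 1 - m) = β * (r m * β ^ (n - 1 - m)) := by
        intro m hm
        simp only [Finset.mem_range] at hm
        have he : n + 1 - 1 - m = (n - 1 - m) + 1 := by omega
        rw [he, pow_succ]; ring
      rw [Finset.sum_congr rfl h1, ← Finset.mul_sum, ih]
      have he0 : n + 1 - 1 - n = 0 := by omega
      have h2 : ((n + 1 : ℕ) : ℤ) = (n : ℤ) + 1 := by push_cast; ring
      rw [he0, pow_zero, mul_one, h2]
      have hrn := hr n
      rw [pow_succ]
      linear_combination hrn
  -- evaluate P at β
  have hPe : P.eval β = ∑ j ∈ Finset.Icc (l + 1) t, b j * (s j - β ^ j * s 0) := by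
    rw [hP]
    simp only [eval_finset_sum, eval_mul, eval_C, eval_pow, eval_X]
    apply Finset.sum_congr rfl
    intro j hj
    simp only [Finset.mem_Icc] at hj
    congr 1
    have hIcc : Finset.Icc l (j - 1) = Finset.Ico l j := by
      rw [← Finset.Ico_add_one_right_eq_Icc]
      congr 1
      omega
    rw [hIcc]
    have hsub : ∑ m ∈ Finset.Ico l j, r m * β ^ (j - 1 - m)
        = (∑ m ∈ Finset.range j, r m * β ^ (j - 1 - m))
          - ∑ m ∈ Finset.range l, r m * β ^ (j - 1 - m) := by
      rw [Finset.sum_Ico_eq_sub _ (by omega : l ≤ j)]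
    rw [hsub, hC j, Finset.sum_eq_zero, sub_zero]
    intro m hm
    simp only [Finset.mem_range] at hm
    rw [hrun m hm, zero_mul]
  -- key identity : P(β) = - s 0 * f(β)
  have hkey : P.eval β = -(s 0 * ∑ i ∈ Finset.range (t + 1), b i * β ^ i) := by
    have hfull : ∑ j ∈ Finset.range (t + 1), b j * (s j - β ^ j * s 0)
        = -(s 0 * ∑ i ∈ Finset.range (t + 1), b i * β ^ i) := by
      have h0 := hann 0
      simp only [zero_add] at h0
      have : ∑ j ∈ Finset.range (t + 1), b j * (s j - β ^ j * s 0)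
          = (∑ j ∈ Finset.range (t + 1), b j * s j)
            - s 0 * ∑ j ∈ Finset.range (t + 1), b j * β ^ j := by
        rw [Finset.mul_sum, ← Finset.sum_sub_distrib]
        apply Finset.sum_congr rfl
        intro j _
        ring
      rw [this, h0]
      ring
    have hsplit : ∑ j ∈ Finset.range (t + 1), b j * (s j - β ^ j * s 0)
        = (∑ j ∈ Finset.range (l + 1), b j * (s j - β ^ j * s 0))
          + ∑ j ∈ Finset.Icc (l + 1) t, b j * (s j - β ^ j * s 0) := by
      rw [← Finset.Ico_add_one_right_eq_Icc,
        Finset.sum_range_add_sum_Ico _ (by omega : l + 1 ≤ t + 1)]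
    have hlow : ∑ j ∈ Finset.range (l + 1), b j * (s j - β ^ j * s 0) = 0 := by
      apply Finset.sum_eq_zero
      intro j hj
      simp only [Finset.mem_range] at hj
      rw [hA j (by omega)]
      ring
    rw [hPe]
    have := hsplit
    rw [hlow, zero_add] at this
    rw [← this, hfull]
  constructor
  · rw [hkey]
    constructor
    · intro h
      rcases mul_eq_zero.mp (neg_eq_zero.mp h) with h' | h'
      · exact h'
      · exact absurd h' hβ
    · intro h
      rw [h]
      ring
  · constructor
    · intro h j hj
      rw [hA j hj, h, mul_zero]
    · intro h
      have := h 0 (Nat.zero_le l)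
      simpa using this
end

section
/- Let f be monic of degree t over F_q with nonzero constant term, s : ℤ → F_q annihilated by f, β ∈ F_q with f(β) ≠ 0, and r_n = s_{n+1} − β s_n. Suppose s has a run of at least l+1 zeroes starting at index 0 (so s_0 = ⋯ = s_l = 0), whence r_0 = ⋯ = r_{l−1} = 0. Then P_{l,r}(x) = (x − β)·P_{l+1,s}(x), where P_{k,u}(x) = Σ_{j=k+1}^t b_j Σ_{m=k}^{j−1} u_m x^{j−1−m}. -/
open Polynomial in
theorem stmt5 {F : Type*} [Field F] [Fintype F]
    (t : ℕ) (b : ℕ → F) (hmonic : b t = 1) (hb0 : b 0 ≠ 0)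
    (s : ℤ → F)
    (hann : ∀ n : ℤ, ∑ i ∈ Finset.range (t + 1), b i * s (n + i) = 0)
    (β : F) (hβ : ∑ i ∈ Finset.range (t + 1), b i * β ^ i ≠ 0)
    (r : ℤ → F) (hr : ∀ n : ℤ, r n = s (n + 1) - β * s n)
    (l : ℕ) (hs : ∀ j : ℕ, j ≤ l → s j = 0)
    (Pr Ps : Polynomial F)
    (hPr : Pr = ∑ j ∈ Finset.Icc (l + 1) t, C (b j) *
        ∑ m ∈ Finset.Icc l (j - 1), C (r m) * X ^ (j - 1 - m))
    (hPs : Ps = ∑ j ∈ Finset.Icc (l + 1 + 1) t, C (b j) *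
        ∑ m ∈ Finset.Icc (l + 1) (j - 1), C (s m) * X ^ (j - 1 - m)) :
    Pr = (X - C β) * Ps := by
  subst hPr hPs
  have key : ∀ j ∈ Finset.Icc (l + 1) t,
      C (b j) * ∑ m ∈ Finset.Icc l (j - 1), C (r m) * X ^ (j - 1 - m)
      = (X - C β) * (C (b j) * ∑ m ∈ Finset.Icc (l + 1) (j - 1), C (s m) * X ^ (j - 1 - m))
        + C (b j * s j) := by
    intro j hj
    simp only [Finset.mem_Icc] at hj
    obtain ⟨hj1, hj2⟩ := hj
    have e1 : ∀ m ∈ Finset.Icc l (j - 1), C (r (m : ℤ)) * X ^ (j - 1 - m)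
        = C (s ((m + 1 : ℕ) : ℤ)) * X ^ (j - 1 - m)
          - C β * (C (s (m : ℤ)) * X ^ (j - 1 - m)) := by
      intro m hm
      rw [hr]
      push_cast
      rw [map_sub, map_mul, sub_mul]
      ring
    rw [Finset.sum_congr rfl e1, Finset.sum_sub_distrib, ← Finset.mul_sum]
    have e2 : ∑ m ∈ Finset.Icc l (j - 1), C (s ((m + 1 : ℕ) : ℤ)) * X ^ (j - 1 - m)
        = ∑ m ∈ Finset.Icc (l + 1) j, C (s (m : ℤ)) * X ^ (j - m) := by
      rw [show Finset.Icc (l + 1) j = (Finset.Icc l (j - 1)).map (addRightEmbedding 1) by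
        rw [Finset.map_add_right_Icc]; congr 1; omega, Finset.sum_map]
      refine Finset.sum_congr rfl fun m hm => ?_
      simp only [addRightEmbedding_apply]
      congr 2
      omega
    have hins : Finset.Icc (l + 1) j = insert j (Finset.Icc (l + 1) (j - 1)) := by
      ext x; simp only [Finset.mem_Icc, Finset.mem_insert]; omega
    have e4 : ∑ m ∈ Finset.Icc l (j - 1), C (s (m : ℤ)) * X ^ (j - 1 - m)
        = ∑ m ∈ Finset.Icc (l + 1) (j - 1), C (s (m : ℤ)) * X ^ (j - 1 - m) := by
      symm
      apply Finset.sum_subset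
      · intro x hx
        simp only [Finset.mem_Icc] at hx ⊢
        omega
      · intro x hx hx'
        simp only [Finset.mem_Icc] at hx hx'
        have : s (x : ℤ) = 0 := hs x (by omega)
        simp [this]
    have e5 : X * ∑ m ∈ Finset.Icc (l + 1) (j - 1), C (s (m : ℤ)) * X ^ (j - 1 - m)
        = ∑ m ∈ Finset.Icc (l + 1) (j - 1), C (s (m : ℤ)) * X ^ (j - m) := by
      rw [Finset.mul_sum]
      refine Finset.sum_congr rfl fun m hm => ?_
      simp only [Finset.mem_Icc] at hm
      rw [show j - m = (j - 1 - m) + 1 by omega]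
      ring
    rw [e2, hins, Finset.sum_insert (by simp only [Finset.mem_Icc]; omega), e4, ← e5, map_mul]
    simp only [Nat.sub_self, pow_zero, mul_one]
    ring
  rw [Finset.sum_congr rfl key, Finset.sum_add_distrib]
  have h6 : ∑ j ∈ Finset.Icc (l + 1) t, C (b j * s (j : ℤ)) = 0 := by
    rw [← map_sum]
    have hz : ∑ j ∈ Finset.Icc (l + 1) t, b j * s (j : ℤ) = 0 := by
      have h0 := hann 0
      simp only [zero_add] at h0
      rw [← h0]
      apply Finset.sum_subset
      · intro x hx
        simp only [Finset.mem_Icc] at hx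
        simp only [Finset.mem_range]
        omega
      · intro x hx hx'
        simp only [Finset.mem_range] at hx
        simp only [Finset.mem_Icc] at hx'
        have : s (x : ℤ) = 0 := hs x (by omega)
        simp [this]
    rw [hz, map_zero]
  have h7 : ∑ j ∈ Finset.Icc (l + 1) t,
      (X - C β) * (C (b j) * ∑ m ∈ Finset.Icc (l + 1) (j - 1), C (s (m : ℤ)) * X ^ (j - 1 - m))
      = (X - C β) * ∑ j ∈ Finset.Icc (l + 1 + 1) t, C (b j) *
          ∑ m ∈ Finset.Icc (l + 1) (j - 1), C (s (m : ℤ)) * X ^ (j - 1 - m) := by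
    rw [← Finset.mul_sum]
    congr 1
    symm
    apply Finset.sum_subset
    · intro x hx
      simp only [Finset.mem_Icc] at hx ⊢
      omega
    · intro x hx hx'
      simp only [Finset.mem_Icc] at hx hx'
      have hx1 : x = l + 1 := by omega
      subst hx1
      rw [Finset.Icc_eq_empty (by omega), Finset.sum_empty, mul_zero]
  rw [h6, h7, add_zero]
end

section
/- Let f ∈ F_q[x] be monic of degree t with nonzero constant term, β ∈ F_q with f(β) ≠ 0, and let r⁽⁰⁾ ∈ G(f) have a run of exactly l zeroes starting at index 0. Define r⁽ⁱ⁾ = (L − β)^{−1} r⁽ⁱ⁻¹⁾ for i ≥ 1. Let z be the multiplicity of β as a root of P_{l,r⁽⁰⁾}. Then for 0 ≤ i ≤ z, the sequence r⁽ⁱ⁾ has a run of zeroes of length l + i starting at index 0, and (r^{(z+1)})_0 ≠ 0. -/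
open Polynomial

noncomputable def QQ {F : Type*} [Field F] (t : ℕ) (b : ℕ → F) (L : ℕ) (s : ℤ → F) :
    Polynomial F :=
  ∑ j ∈ Finset.Icc (L + 1) t, C (b j) * ∑ m ∈ Finset.Ico L j, C (s (m : ℤ)) * X ^ (j - 1 - m)

lemma svals {F : Type*} [Field F] (β : F) (s r : ℤ → F)
    (hrel : ∀ n : ℤ, r n = s (n + 1) - β * s n)
    (L : ℕ) (hr0 : ∀ m : ℕ, m < L → r (m : ℤ) = 0) :
    ∀ m : ℕ, s (m : ℤ) = β ^ m * s 0 + ∑ k ∈ Finset.Ico L m, β ^ (m - 1 - k) * r (k : ℤ) := by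
  intro m
  induction m with
  | zero => simp
  | succ m ih =>
    have h1 : s ((m : ℤ) + 1) = β * s (m : ℤ) + r (m : ℤ) := by
      have h := hrel (m : ℤ); rw [h]; ring
    have hcast : ((m + 1 : ℕ) : ℤ) = (m : ℤ) + 1 := by push_cast; ring
    rw [hcast, h1, ih]
    by_cases hm : m < L
    · rw [hr0 m hm]
      rw [Finset.Ico_eq_empty (by omega : ¬ L < m), Finset.Ico_eq_empty (by omega : ¬ L < m + 1)]
      simp [pow_succ]; ring
    · push_neg at hm
      rw [Finset.sum_Ico_succ_top hm]
      have h2 : ∑ k ∈ Finset.Ico L m, β ^ (m + 1 - 1 - k) * r (k : ℤ) =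
          β * ∑ k ∈ Finset.Ico L m, β ^ (m - 1 - k) * r (k : ℤ) := by
        rw [Finset.mul_sum]
        refine Finset.sum_congr rfl fun k hk => ?_
        rw [Finset.mem_Ico] at hk
        rw [show m + 1 - 1 - k = (m - 1 - k) + 1 from by omega, pow_succ]; ring
      rw [h2, show m + 1 - 1 - m = 0 from by omega]
      rw [pow_succ]; ring

lemma keyEval {F : Type*} [Field F] (t : ℕ) (b : ℕ → F) (β : F) (s r : ℤ → F)
    (hs : ∑ j ∈ Finset.range (t + 1), b j * s (j : ℤ) = 0)
    (hrel : ∀ n : ℤ, r n = s (n + 1) - β * s n)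
    (L : ℕ) (hr0 : ∀ m : ℕ, m < L → r (m : ℤ) = 0) :
    (∑ i ∈ Finset.range (t + 1), b i * β ^ i) * s 0 + (QQ t b L r).eval β = 0 := by
  have hev : (QQ t b L r).eval β =
      ∑ j ∈ Finset.Icc (L + 1) t, b j * ∑ m ∈ Finset.Ico L j, r (m : ℤ) * β ^ (j - 1 - m) := by
    simp [QQ, eval_finset_sum]
  have hsub : ∑ j ∈ Finset.Icc (L + 1) t, b j * ∑ m ∈ Finset.Ico L j, r (m : ℤ) * β ^ (j - 1 - m)
      = ∑ j ∈ Finset.range (t + 1), b j * ∑ m ∈ Finset.Ico L j, r (m : ℤ) * β ^ (j - 1 - m) := by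
    refine Finset.sum_subset ?_ ?_
    · intro j hj; rw [Finset.mem_Icc] at hj; rw [Finset.mem_range]; omega
    · intro j hj hj2
      rw [Finset.mem_range] at hj; rw [Finset.mem_Icc] at hj2
      rw [Finset.Ico_eq_empty (by omega : ¬ L < j)]
      simp
  rw [hev, hsub]
  have hexp : ∀ j ∈ Finset.range (t + 1), b j * s (j : ℤ) =
      b j * β ^ j * s 0 + b j * ∑ m ∈ Finset.Ico L j, r (m : ℤ) * β ^ (j - 1 - m) := by
    intro j _
    rw [svals β s r hrel L hr0 j, mul_add]
    congr 1
    · ring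
    · rw [Finset.mul_sum, Finset.mul_sum]
      exact Finset.sum_congr rfl fun k _ => by ring
  rw [Finset.sum_congr rfl hexp, Finset.sum_add_distrib] at hs
  rw [← hs, Finset.sum_mul]

lemma tele {F : Type*} [Field F] (β : F) (s r : ℤ → F)
    (hrel : ∀ n : ℤ, r n = s (n + 1) - β * s n)
    (L : ℕ) (hsL : s (L : ℤ) = 0) (d : ℕ) :
    (X - C β) * ∑ m ∈ Finset.Ico (L + 1) (L + 1 + d), C (s (m : ℤ)) * X ^ (L + d - m) =
      (∑ m ∈ Finset.Ico L (L + 1 + d), C (r (m : ℤ)) * X ^ (L + d - m))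
        - C (s ((L + 1 + d : ℕ) : ℤ)) := by
  induction d with
  | zero =>
    have h1 : s (((L + 1 + 0 : ℕ) : ℤ)) = r (L : ℤ) := by
      have h := hrel (L : ℤ)
      rw [show ((L + 1 + 0 : ℕ) : ℤ) = (L : ℤ) + 1 from by push_cast; ring, h, hsL]; ring
    rw [h1]
    rw [show Finset.Ico L (L + 1) = {L} from by rw [Nat.Ico_succ_singleton]]
    simp
  | succ d ih =>
    rw [show L + 1 + (d + 1) = (L + 1 + d) + 1 from rfl]
    rw [Finset.sum_Ico_succ_top (by omega : L + 1 ≤ L + 1 + d),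
        Finset.sum_Ico_succ_top (by omega : L ≤ L + 1 + d)]
    have hA : ∑ m ∈ Finset.Ico (L + 1) (L + 1 + d), C (s (m : ℤ)) * X ^ (L + (d + 1) - m) =
        X * ∑ m ∈ Finset.Ico (L + 1) (L + 1 + d), C (s (m : ℤ)) * X ^ (L + d - m) := by
      rw [Finset.mul_sum]
      refine Finset.sum_congr rfl fun m hm => ?_
      rw [Finset.mem_Ico] at hm
      rw [show L + (d + 1) - m = (L + d - m) + 1 from by omega, pow_succ]; ring
    have hB : ∑ m ∈ Finset.Ico L (L + 1 + d), C (r (m : ℤ)) * X ^ (L + (d + 1) - m) =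
        X * ∑ m ∈ Finset.Ico L (L + 1 + d), C (r (m : ℤ)) * X ^ (L + d - m) := by
      rw [Finset.mul_sum]
      refine Finset.sum_congr rfl fun m hm => ?_
      rw [Finset.mem_Ico] at hm
      rw [show L + (d + 1) - m = (L + d - m) + 1 from by omega, pow_succ]; ring
    rw [hA, hB, show L + (d + 1) - (L + 1 + d) = 0 from by omega, pow_zero]
    have hT : r ((L + 1 + d : ℕ) : ℤ) =
        s (((L + 1 + d : ℕ) : ℤ) + 1) - β * s ((L + 1 + d : ℕ) : ℤ) := hrel _
    have hc : ((L + 1 + d + 1 : ℕ) : ℤ) = ((L + 1 + d : ℕ) : ℤ) + 1 := by push_cast; ring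
    rw [hc, hT]
    have : (X - C β) * ∑ m ∈ Finset.Ico (L + 1) (L + 1 + d), C (s (m : ℤ)) * X ^ (L + d - m) =
        (∑ m ∈ Finset.Ico L (L + 1 + d), C (r (m : ℤ)) * X ^ (L + d - m))
          - C (s ((L + 1 + d : ℕ) : ℤ)) := ih
    simp only [map_sub, map_mul]
    linear_combination X * this

lemma Qstep {F : Type*} [Field F] (t : ℕ) (b : ℕ → F) (β : F) (s r : ℤ → F)
    (hs : ∑ j ∈ Finset.range (t + 1), b j * s (j : ℤ) = 0)
    (hrel : ∀ n : ℤ, r n = s (n + 1) - β * s n)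
    (L : ℕ) (hLt : L + 1 ≤ t) (hsz : ∀ m : ℕ, m ≤ L → s (m : ℤ) = 0) :
    (X - C β) * QQ t b (L + 1) s = QQ t b L r := by
  have hsL1 : s (((L + 1 : ℕ)) : ℤ) = r (L : ℤ) := by
    have h := hrel (L : ℤ)
    rw [show ((L + 1 : ℕ) : ℤ) = (L : ℤ) + 1 from by push_cast; ring, h, hsz L le_rfl]; ring
  -- multiply into the sum and apply tele termwise
  have h1 : (X - C β) * QQ t b (L + 1) s =
      ∑ j ∈ Finset.Icc (L + 2) t, (C (b j) *
        ((∑ m ∈ Finset.Ico L j, C (r (m : ℤ)) * X ^ (j - 1 - m)) - C (s (j : ℤ)))) := by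
    rw [QQ, Finset.mul_sum]
    refine Finset.sum_congr rfl fun j hj => ?_
    rw [Finset.mem_Icc] at hj
    obtain ⟨d, rfl⟩ : ∃ d, j = L + 1 + d := ⟨j - (L + 1), by omega⟩
    rw [show (L + 1) + 1 = L + 2 from rfl] at *
    have hexp : ∀ m : ℕ, L + 1 + d - 1 - m = L + d - m := fun m => by omega
    have ht := tele β s r hrel L (hsz L le_rfl) d
    calc (X - C β) * (C (b (L + 1 + d)) *
          ∑ m ∈ Finset.Ico (L + 1) (L + 1 + d), C (s (m : ℤ)) * X ^ (L + 1 + d - 1 - m))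
        = C (b (L + 1 + d)) * ((X - C β) *
          ∑ m ∈ Finset.Ico (L + 1) (L + 1 + d), C (s (m : ℤ)) * X ^ (L + d - m)) := by
          simp only [hexp]; ring
      _ = _ := by
          rw [ht]
          congr 2
          exact Finset.sum_congr rfl fun m _ => by rw [hexp]
  rw [h1]
  simp only [mul_sub]
  rw [Finset.sum_sub_distrib]
  -- second sum is a constant
  have h2 : ∑ j ∈ Finset.Icc (L + 2) t, C (b j) * C (s (j : ℤ)) =
      C (∑ j ∈ Finset.Icc (L + 2) t, b j * s (j : ℤ)) := by
    rw [map_sum]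
    exact Finset.sum_congr rfl fun j _ => (map_mul C _ _).symm
  have h3 : ∑ j ∈ Finset.Icc (L + 2) t, b j * s (j : ℤ) = -(b (L + 1) * r (L : ℤ)) := by
    have hsplit : ∑ j ∈ Finset.range (L + 2), b j * s (j : ℤ) +
        ∑ j ∈ Finset.Icc (L + 2) t, b j * s (j : ℤ) =
        ∑ j ∈ Finset.range (t + 1), b j * s (j : ℤ) := by
      simp only [Finset.range_eq_Ico]
      rw [show Finset.Icc (L + 2) t = Finset.Ico (L + 2) (t + 1) from (Finset.Ico_add_one_right_eq_Icc _ _).symm]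
      exact Finset.sum_Ico_consecutive _ (by omega) (by omega)
    have hlow : ∑ j ∈ Finset.range (L + 2), b j * s (j : ℤ) = b (L + 1) * s ((L + 1 : ℕ) : ℤ) := by
      rw [Finset.sum_range_succ]
      rw [Finset.sum_eq_zero fun j hj => by
        rw [Finset.mem_range] at hj; rw [hsz j (by omega)]; ring]
      ring
    rw [hs] at hsplit
    rw [hlow, hsL1] at hsplit
    linear_combination hsplit
  rw [h2, h3]
  -- split off j = L+1 from QQ t b L r
  have h4 : QQ t b L r = C (b (L + 1)) * C (r (L : ℤ)) +
      ∑ j ∈ Finset.Icc (L + 2) t, C (b j) * ∑ m ∈ Finset.Ico L j, C (r (m : ℤ)) * X ^ (j - 1 - m) := by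
    rw [QQ, show Finset.Icc (L + 1) t = insert (L + 1) (Finset.Icc (L + 2) t) from by
      ext x; simp only [Finset.mem_Icc, Finset.mem_insert]; omega]
    rw [Finset.sum_insert (by simp only [Finset.mem_Icc]; omega)]
    congr 1
    rw [show Finset.Ico L (L + 1) = {L} from Nat.Ico_succ_singleton L]
    simp
  rw [h4]
  simp only [Finset.mul_sum, mul_sub]
  rw [map_neg, map_mul]
  ring

open Polynomial in
theorem stmt11 {F : Type*} [Field F] [Fintype F]
    (t : ℕ) (b : ℕ → F) (hmonic : b t = 1) (hb0 : b 0 ≠ 0)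
    (β : F) (hβ : ∑ i ∈ Finset.range (t + 1), b i * β ^ i ≠ 0)
    (r : ℕ → ℤ → F)
    (hann : ∀ i : ℕ, ∀ n : ℤ, ∑ j ∈ Finset.range (t + 1), b j * r i (n + j) = 0)
    (hinv : ∀ i : ℕ, ∀ n : ℤ, r i n = r (i + 1) (n + 1) - β * r (i + 1) n)
    (l : ℕ) (hrun : ∀ m : ℕ, m < l → r 0 m = 0) (hrl : r 0 l ≠ 0)
    (P : Polynomial F)
    (hP : P = ∑ j ∈ Finset.Icc (l + 1) t, C (b j) *
        ∑ m ∈ Finset.Icc l (j - 1), C (r 0 m) * X ^ (j - 1 - m))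
    (z : ℕ) (hz : (X - C β) ^ z ∣ P ∧ ¬ (X - C β) ^ (z + 1) ∣ P) :
    (∀ i : ℕ, i ≤ z →
        (∀ m : ℕ, m < l + i → r i m = 0) ∧ r i (l + i) ≠ 0) ∧
      r (z + 1) 0 ≠ 0 := by
  have hXC : (X - C β : Polynomial F) ≠ 0 := X_sub_C_ne_zero β
  have hPQ : P = QQ t b l (r 0) := by
    rw [hP, QQ]
    refine Finset.sum_congr rfl fun j hj => ?_
    rw [Finset.mem_Icc] at hj
    congr 1
    rw [show Finset.Icc l (j - 1) = Finset.Ico l j from by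
      rw [← Finset.Ico_add_one_right_eq_Icc]; congr 1; omega]
  -- annihilation specialized at 0
  have hann0 : ∀ i : ℕ, ∑ j ∈ Finset.range (t + 1), b j * r i (j : ℤ) = 0 := by
    intro i
    have h := hann i 0
    simpa using h
  have key : ∀ i : ℕ, i ≤ z →
      (∀ m : ℕ, m < l + i → r i (m : ℤ) = 0) ∧ r i ((l + i : ℕ) : ℤ) ≠ 0 ∧
      (X - C β) ^ (z - i) ∣ QQ t b (l + i) (r i) ∧
      ¬ (X - C β) ^ (z - i + 1) ∣ QQ t b (l + i) (r i) := by
    intro i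
    induction i with
    | zero =>
      intro _
      refine ⟨fun m hm => hrun m (by omega), ?_, ?_, ?_⟩
      · simpa using hrl
      · simpa [hPQ] using hz.1
      · simpa [hPQ] using hz.2
    | succ i ih =>
      intro hiz
      obtain ⟨h1, h2, h3, h4⟩ := ih (by omega)
      have hrel := hinv i
      have hdvd1 : (X - C β) ∣ QQ t b (l + i) (r i) :=
        dvd_trans (dvd_pow_self _ (by omega : z - i ≠ 0)) h3
      have heval0 : (QQ t b (l + i) (r i)).eval β = 0 :=
        dvd_iff_isRoot.mp hdvd1
      have hke := keyEval t b β (r (i + 1)) (r i) (hann0 (i + 1)) hrel (l + i) h1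
      rw [heval0, add_zero] at hke
      have hs0 : r (i + 1) 0 = 0 := by
        rcases mul_eq_zero.mp hke with h | h
        · exact absurd h hβ
        · exact h
      have hsm : ∀ m : ℕ, m ≤ l + i → r (i + 1) (m : ℤ) = 0 := by
        intro m hm
        rw [svals β (r (i + 1)) (r i) hrel (l + i) h1 m, hs0,
          Finset.Ico_eq_empty (by omega : ¬ l + i < m)]
        simp
      have hstop : r (i + 1) ((l + i + 1 : ℕ) : ℤ) = r i ((l + i : ℕ) : ℤ) := by
        have h := hrel ((l + i : ℕ) : ℤ)
        rw [hsm (l + i) le_rfl] at h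
        rw [show ((l + i + 1 : ℕ) : ℤ) = ((l + i : ℕ) : ℤ) + 1 from by push_cast; ring]
        rw [h]; ring
      have hQne : QQ t b (l + i) (r i) ≠ 0 := fun h0 => h4 (h0 ▸ dvd_zero _)
      have hLt : l + i + 1 ≤ t := by
        by_contra hc
        apply hQne
        rw [QQ, Finset.Icc_eq_empty (by omega)]
        simp
      have hQid : (X - C β) * QQ t b (l + i + 1) (r (i + 1)) = QQ t b (l + i) (r i) :=
        Qstep t b β (r (i + 1)) (r i) (hann0 (i + 1)) hrel (l + i) hLt hsm
      have hla : l + (i + 1) = l + i + 1 := by omega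
      rw [hla]
      refine ⟨fun m hm => hsm m (by omega), ?_, ?_, ?_⟩
      · rw [hstop]; exact h2
      · have h3' : (X - C β) ^ ((z - (i + 1)) + 1) ∣
            (X - C β) * QQ t b (l + i + 1) (r (i + 1)) := by
          rw [hQid, show z - (i + 1) + 1 = z - i from by omega]
          exact h3
        rw [pow_succ'] at h3'
        exact (mul_dvd_mul_iff_left hXC).mp h3'
      · intro hcon
        apply h4
        rw [← hQid, show z - i + 1 = (z - (i + 1) + 1) + 1 from by omega, pow_succ']
        exact mul_dvd_mul_left _ hcon
  obtain ⟨h1z, h2z, -, h4z⟩ := key z le_rfl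
  refine ⟨fun i hiz => ⟨(key i hiz).1, (key i hiz).2.1⟩, ?_⟩
  rw [Nat.sub_self, pow_one] at h4z
  have hne : (QQ t b (l + z) (r z)).eval β ≠ 0 := fun h0 => h4z (dvd_iff_isRoot.mpr h0)
  have hke := keyEval t b β (r (z + 1)) (r z) (hann0 (z + 1)) (hinv z) (l + z) h1z
  intro hc
  rw [hc, mul_zero, zero_add] at hke
  exact hne hke
end
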